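/- arXiv:1403.0945 — 4 statements merged into one kernel-verified Lean document; each statement's English description precedes it below -/
import Mathlib

section
/- There exists an absolute constant C > 0 such that for every prime N, every function a : ℤ/Nℤ → ℂ, and every arithmetic progression P contained in the interval [N], one has |E_{n∈[N]} 1_P(n) · a(n)| ≤ C · ‖a‖_{U²(ℤ_N)}. -/
/-!
Reduce mod `N`: the average is `N⁻¹ ∑ₓ a(x) conj (b(x))`, where `b` is the indicator of the image
of `P` in `ℤ/Nℤ`, again an arithmetic progression. By Parseval and Hölder with exponents `4` and
`4/3` it is at most `N⁻² ‖â‖₄ ‖b̂‖_{4/3}` (with the unnormalized `ZMod.dft`), and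
`‖â‖₄ = N ‖a‖_{U²}`. If the common difference `δ` is nonzero, `b̂(ξ)` is a geometric sum of ratio
`e(-δξ)`, hence `|b̂(ξ)| ≤ N / (2 min(v, N - v))` with `v = (δξ).val`; since `ξ ↦ δξ` permutes
`ℤ/Nℤ`, `∑_ξ |b̂(ξ)|^{4/3} ≤ (1 + 2 ζ(4/3)) N^{4/3}`.
-/

open Finset

/-- The Gowers uniformity norm `‖a‖_{U^s(ℤ_N)}`, defined inductively. -/
noncomputable def gowersNorm (N : ℕ) [NeZero N] : ℕ → (ZMod N → ℂ) → ℝ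
  | 0, a => ‖(∑ n : ZMod N, a n) / (N : ℂ)‖
  | 1, a => ‖(∑ n : ZMod N, a n) / (N : ℂ)‖
  | (s + 2), a =>
      ((∑ t : ZMod N,
          gowersNorm N (s + 1) (fun n => a n * (starRingEnd ℂ) (a (n + t))) ^ 2 ^ (s + 1))
        / (N : ℝ)) ^ ((1 : ℝ) / 2 ^ (s + 2))

theorem norm_geom_sum_le_of_norm_le_one {K : Type*} [NormedDivisionRing K] {ω : K}
    (hω : ‖ω‖ ≤ 1) (hω1 : ω ≠ 1) (L : ℕ) : ‖∑ k ∈ range L, ω ^ k‖ ≤ 2 / ‖1 - ω‖ := by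
  rw [geom_sum_eq hω1, norm_div, norm_sub_rev ω 1]
  gcongr
  calc ‖ω ^ L - 1‖ ≤ ‖ω ^ L‖ + ‖(1 : K)‖ := norm_sub_le _ _
    _ ≤ 2 := by rw [norm_pow, norm_one]; linarith [pow_le_one₀ (norm_nonneg ω) hω (n := L)]

namespace ZMod

open ComplexConjugate Real

theorem injOn_natCast_Icc_one (N : ℕ) : Set.InjOn (Nat.cast : ℕ → ZMod N) (Icc 1 N) := by
  intro x hx y hy h
  simp only [coe_Icc, Set.mem_Icc] at hx hy
  refine ((natCast_eq_natCast_iff x y N).1 h).eq_of_abs_lt (abs_sub_lt_iff.2 ⟨?_, ?_⟩) <;> omega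

theorem sum_Icc_ite_mem_eq_sum_image {M : Type*} [AddCommMonoid M] {N : ℕ} {Q : Finset ℕ}
    (hQ : Q ⊆ Icc 1 N) (f : ZMod N → M) :
    ∑ n ∈ Icc 1 N, (if n ∈ Q then f n else 0) = ∑ x ∈ Q.image (Nat.cast : ℕ → ZMod N), f x := by
  rw [sum_ite_mem, inter_eq_right.2 hQ, sum_image ((injOn_natCast_Icc_one N).mono hQ)]

variable {N : ℕ} [NeZero N]

theorem sum_stdAddChar_mul_dft (f : ZMod N → ℂ) (x : ZMod N) :
    ∑ ξ, stdAddChar (ξ * x) * 𝓕 f ξ = N * f x := by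
  have h := invDFT_apply (𝓕 f) x
  rw [LinearEquiv.symm_apply_apply, smul_eq_mul] at h
  rw [h, ← mul_assoc, mul_inv_cancel₀ (NeZero.ne (N : ℂ)), one_mul]
  rfl

theorem sum_dft_mul_conj_dft (f g : ZMod N → ℂ) :
    ∑ ξ, 𝓕 f ξ * conj (𝓕 g ξ) = N * ∑ x, f x * conj (g x) := by
  calc ∑ ξ, 𝓕 f ξ * conj (𝓕 g ξ)
      = ∑ x, ∑ ξ, stdAddChar (ξ * x) * 𝓕 f ξ * conj (g x) := by
        simp_rw [dft_apply g, smul_eq_mul, map_sum, map_mul, ← AddChar.map_neg_eq_conj, neg_neg,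
          mul_sum]
        rw [sum_comm]
        exact sum_congr rfl fun x _ => sum_congr rfl fun ξ _ => by ring_nf
    _ = N * ∑ x, f x * conj (g x) := by
        simp_rw [← sum_mul, sum_stdAddChar_mul_dft, mul_sum, mul_assoc]

theorem dft_autocorrelation (a : ZMod N → ℂ) (ξ : ZMod N) :
    𝓕 (fun t => ∑ n, a n * conj (a (n + t))) ξ = (‖𝓕 a (-ξ)‖ ^ 2 : ℝ) := by
  rw [Complex.ofReal_pow, ← Complex.mul_conj', dft_apply, dft_apply, map_sum, sum_mul_sum]
  simp_rw [smul_eq_mul, mul_sum]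
  rw [sum_comm]
  refine sum_congr rfl fun n _ => ?_
  refine Fintype.sum_equiv (Equiv.addLeft n) _ _ fun t => ?_
  simp only [Equiv.coe_addLeft, map_mul, ← AddChar.map_neg_eq_conj]
  rw [mul_mul_mul_comm, ← AddChar.map_add_eq_mul]
  ring_nf

theorem sum_norm_dft_sq (f : ZMod N → ℂ) : ∑ ξ, ‖𝓕 f ξ‖ ^ 2 = N * ∑ x, ‖f x‖ ^ 2 := by
  have h := sum_dft_mul_conj_dft f f
  simp_rw [Complex.mul_conj'] at h
  exact_mod_cast h

theorem gowersNorm_two_eq (a : ZMod N → ℂ) :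
    gowersNorm N 2 a = (∑ ξ, ‖𝓕 a ξ‖ ^ (4 : ℝ)) ^ (1 / 4 : ℝ) / N := by
  set A : ZMod N → ℂ := fun t => ∑ n, a n * conj (a (n + t))
  have hA : ∑ t, ‖A t‖ ^ 2 = (∑ ξ, ‖𝓕 a ξ‖ ^ 4) / N := by
    have hN : (N : ℝ) ≠ 0 := NeZero.ne _
    rw [eq_div_iff hN, mul_comm, ← sum_norm_dft_sq]
    refine Fintype.sum_equiv (Equiv.neg _) _ _ fun ξ => ?_
    rw [dft_autocorrelation, Complex.norm_real, Real.norm_of_nonneg (by positivity)]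
    simp only [Equiv.neg_apply]; ring
  have h2 : gowersNorm N 2 a = ((∑ t, (‖A t‖ / N) ^ 2) / N) ^ (1 / 4 : ℝ) := by
    simp only [gowersNorm, norm_div, Complex.norm_natCast]; norm_num; rfl
  have hN4 : ((N : ℝ) ^ 4) ^ (1 / 4 : ℝ) = N := by
    rw [← Real.rpow_natCast, ← Real.rpow_mul (Nat.cast_nonneg N)]; norm_num
  simp_rw [h2, div_pow, ← sum_div, hA, div_div, Real.rpow_ofNat]
  rw [show (N : ℝ) * N ^ 2 * N = N ^ 4 by ring, Real.div_rpow (by positivity) (by positivity), hN4]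

theorem mul_norm_sum_mul_conj_le {p q : ℝ} (hpq : p.HolderConjugate q) (f g : ZMod N → ℂ) :
    N * ‖∑ x, f x * conj (g x)‖ ≤
      (∑ ξ, ‖𝓕 f ξ‖ ^ p) ^ (1 / p) * (∑ ξ, ‖𝓕 g ξ‖ ^ q) ^ (1 / q) := by
  calc (N : ℝ) * ‖∑ x, f x * conj (g x)‖ = ‖∑ ξ, 𝓕 f ξ * conj (𝓕 g ξ)‖ := by
        rw [sum_dft_mul_conj_dft, norm_mul, Complex.norm_natCast]
    _ ≤ ∑ ξ, ‖𝓕 f ξ‖ * ‖𝓕 g ξ‖ := by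
        simpa only [norm_mul, Complex.norm_conj] using
          norm_sum_le univ fun ξ => 𝓕 f ξ * conj (𝓕 g ξ)
    _ ≤ _ := Real.inner_le_Lp_mul_Lq_of_nonneg _ hpq (fun _ _ => norm_nonneg _)
        (fun _ _ => norm_nonneg _)

theorem norm_sum_div_le_gowersNorm_mul (a b : ZMod N → ℂ) :
    ‖(∑ x, a x * conj (b x)) / N‖ ≤
      gowersNorm N 2 a * (∑ ξ, ‖𝓕 b ξ‖ ^ (4 / 3 : ℝ)) ^ (3 / 4 : ℝ) / N := by
  have hpq : (4 : ℝ).HolderConjugate (4 / 3) :=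
    (Real.holderConjugate_iff_eq_conjExponent (by norm_num)).2 (by norm_num)
  have hN : (0 : ℝ) < N := by exact_mod_cast Nat.pos_of_neZero N
  have h := mul_norm_sum_mul_conj_le hpq a b
  rw [show (1 : ℝ) / (4 / 3) = 3 / 4 by norm_num] at h
  rw [norm_div, Complex.norm_natCast, gowersNorm_two_eq, div_mul_eq_mul_div,
    div_le_div_iff_of_pos_right hN, le_div_iff₀ hN]
  linarith

theorem four_mul_val_div_le_norm_one_sub_stdAddChar {y : ZMod N} (hy : 2 * y.val ≤ N) :
    4 * y.val / N ≤ ‖1 - stdAddChar y‖ := by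
  have hN : (0 : ℝ) < N := by exact_mod_cast Nat.pos_of_neZero N
  have hyN : (2 * y.val : ℝ) ≤ N := by exact_mod_cast hy
  have hθ : π * y.val / N ≤ π / 2 := by
    rw [div_le_div_iff₀ hN two_pos]; nlinarith [pi_pos]
  have he : stdAddChar y = Complex.exp (Complex.I * (2 * π * y.val / N : ℝ)) := by
    rw [stdAddChar_apply, toCircle_apply]; push_cast; ring_nf
  rw [he, norm_sub_rev, Complex.norm_exp_I_mul_ofReal_sub_one,
    show 2 * π * y.val / N / 2 = π * y.val / N by ring, norm_mul, Real.norm_two,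
    Real.norm_of_nonneg (Real.sin_nonneg_of_nonneg_of_le_pi (by positivity) (by linarith [pi_pos]))]
  calc 4 * (y.val : ℝ) / N = 2 * (2 / π * (π * y.val / N)) := by field_simp; ring
    _ ≤ 2 * Real.sin (π * y.val / N) := by gcongr; exact Real.mul_le_sin (by positivity) hθ

theorem norm_geom_sum_stdAddChar_le {y : ZMod N} (hy0 : y ≠ 0) (hy : 2 * y.val ≤ N) (L : ℕ) :
    ‖∑ k ∈ range L, stdAddChar y ^ k‖ ≤ N / (2 * y.val) := by
  have hN : (0 : ℝ) < N := by exact_mod_cast Nat.pos_of_neZero N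
  have hv : (0 : ℝ) < y.val := by exact_mod_cast (val_pos.2 hy0)
  have hy1 : stdAddChar y ≠ 1 := by
    rwa [← AddChar.map_zero_eq_one (stdAddChar (N := N)), injective_stdAddChar.ne_iff]
  calc ‖∑ k ∈ range L, stdAddChar y ^ k‖ ≤ 2 / ‖1 - stdAddChar y‖ :=
        norm_geom_sum_le_of_norm_le_one (AddChar.norm_apply _ _).le hy1 L
    _ ≤ 2 / (4 * y.val / N) := by
        gcongr
        exact four_mul_val_div_le_norm_one_sub_stdAddChar hy
    _ = N / (2 * y.val) := by field_simp; ring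

theorem norm_geom_sum_stdAddChar_neg (y : ZMod N) (L : ℕ) :
    ‖∑ k ∈ range L, stdAddChar (-y) ^ k‖ = ‖∑ k ∈ range L, stdAddChar y ^ k‖ := by
  simp_rw [AddChar.map_neg_eq_conj, ← map_pow, ← map_sum, Complex.norm_conj]

theorem norm_geom_sum_stdAddChar_rpow_le {y : ZMod N} (hy0 : y ≠ 0) {p : ℝ} (hp : 0 ≤ p)
    (L : ℕ) : ‖∑ k ∈ range L, stdAddChar y ^ k‖ ^ p ≤
      N ^ p * (((y.val : ℝ) ^ p)⁻¹ + (((-y).val : ℝ) ^ p)⁻¹) := by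
  have key : ∀ z : ZMod N, z ≠ 0 → 2 * z.val ≤ N →
      ‖∑ k ∈ range L, stdAddChar z ^ k‖ ^ p ≤ N ^ p * ((z.val : ℝ) ^ p)⁻¹ := by
    intro z hz0 hz
    have hv : (0 : ℝ) < z.val := by exact_mod_cast (val_pos.2 hz0)
    calc ‖∑ k ∈ range L, stdAddChar z ^ k‖ ^ p ≤ (N / z.val : ℝ) ^ p := by
          gcongr
          refine (norm_geom_sum_stdAddChar_le hz0 hz L).trans ?_
          gcongr; linarith
      _ = N ^ p * ((z.val : ℝ) ^ p)⁻¹ := by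
          rw [Real.div_rpow (by positivity) hv.le, div_eq_mul_inv]
  have hsum : y.val + (-y).val = N := by rw [neg_val, if_neg hy0]; have := val_lt y; omega
  have h₁ : (0 : ℝ) ≤ N ^ p * ((y.val : ℝ) ^ p)⁻¹ := by positivity
  have h₂ : (0 : ℝ) ≤ N ^ p * (((-y).val : ℝ) ^ p)⁻¹ := by positivity
  rcases le_total (2 * y.val) N with h | h
  · linarith [key y hy0 h]
  · have := key (-y) (neg_ne_zero.2 hy0) (by omega)
    rw [norm_geom_sum_stdAddChar_neg] at this
    linarith

def arithProg (x₀ δ : ZMod N) (L : ℕ) : Finset (ZMod N) :=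
  (range L).image fun k : ℕ => x₀ + k * δ

theorem arithProg_eq_arithProg_min (x₀ δ : ZMod N) (L : ℕ) :
    arithProg x₀ δ L = arithProg x₀ δ (min L N) := by
  ext x
  simp only [arithProg, mem_image, mem_range, lt_min_iff]
  constructor
  · rintro ⟨k, hk, rfl⟩
    exact ⟨k % N, ⟨(Nat.mod_le k N).trans_lt hk, Nat.mod_lt k (Nat.pos_of_neZero N)⟩, by
      rw [natCast_mod]⟩
  · rintro ⟨k, ⟨hk, -⟩, rfl⟩
    exact ⟨k, hk, rfl⟩

theorem sum_mul_conj_indicator (S : Finset (ZMod N)) (a : ZMod N → ℂ) :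
    ∑ x, a x * conj ((S : Set (ZMod N)).indicator (1 : ZMod N → ℂ) x) = ∑ x ∈ S, a x := by
  simp [Set.indicator_apply, sum_ite_mem]

theorem dft_indicator_apply (S : Finset (ZMod N)) (ξ : ZMod N) :
    𝓕 ((S : Set (ZMod N)).indicator (1 : ZMod N → ℂ)) ξ = ∑ x ∈ S, stdAddChar (-(x * ξ)) := by
  simp [dft_apply, Set.indicator_apply, sum_ite_mem]

theorem norm_dft_indicator_le_card (S : Finset (ZMod N)) (ξ : ZMod N) :
    ‖𝓕 ((S : Set (ZMod N)).indicator (1 : ZMod N → ℂ)) ξ‖ ≤ #S := by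
  rw [dft_indicator_apply]
  simpa using norm_sum_le_of_le S fun x _ => (AddChar.norm_apply stdAddChar (-(x * ξ))).le

theorem norm_dft_indicator_arithProg [Fact N.Prime] (x₀ : ZMod N) {δ : ZMod N} (hδ : δ ≠ 0)
    {L : ℕ} (hL : L ≤ N) (ξ : ZMod N) :
    ‖𝓕 ((arithProg x₀ δ L : Set (ZMod N)).indicator (1 : ZMod N → ℂ)) ξ‖ =
      ‖∑ k ∈ range L, stdAddChar (-(δ * ξ)) ^ k‖ := by
  have hinj : Set.InjOn (fun k : ℕ => x₀ + k * δ) (range L) := by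
    intro k₁ hk₁ k₂ hk₂ h
    simp only [coe_range, Set.mem_Iio] at hk₁ hk₂
    have := mul_right_cancel₀ hδ (add_left_cancel h)
    rwa [natCast_eq_natCast_iff', Nat.mod_eq_of_lt (by omega), Nat.mod_eq_of_lt (by omega)] at this
  rw [dft_indicator_apply, arithProg, sum_image hinj]
  have : ∀ k : ℕ, stdAddChar (-((x₀ + (k : ZMod N) * δ) * ξ)) =
      stdAddChar (-(x₀ * ξ)) * stdAddChar (-(δ * ξ)) ^ k := fun k => by
    rw [← AddChar.map_nsmul_eq_pow, ← AddChar.map_add_eq_mul, nsmul_eq_mul]; ring_nf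
  simp_rw [this, ← mul_sum, norm_mul, AddChar.norm_apply, one_mul]

theorem sum_inv_val_mul_rpow_le_tsum [Fact N.Prime] {c : ZMod N} (hc : c ≠ 0) {p : ℝ}
    (hp : 1 < p) : ∑ ξ : ZMod N, (((c * ξ).val : ℝ) ^ p)⁻¹ ≤ ∑' n : ℕ, ((n : ℝ) ^ p)⁻¹ := by
  rw [Fintype.sum_equiv (Equiv.mulLeft₀ c hc) (fun ξ => (((c * ξ).val : ℝ) ^ p)⁻¹)
    (fun ξ => ((ξ.val : ℝ) ^ p)⁻¹) fun _ => rfl, ← tsum_fintype (L := .unconditional _)]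
  exact tsum_comp_le_tsum_of_inj (Real.summable_nat_rpow_inv.2 hp) (fun n => by positivity)
    (val_injective N)

theorem norm_dft_indicator_arithProg_rpow_le [Fact N.Prime] (x₀ : ZMod N) {δ : ZMod N}
    (hδ : δ ≠ 0) {L : ℕ} (hL : L ≤ N) {p : ℝ} (hp : 0 ≤ p) (ξ : ZMod N) :
    ‖𝓕 ((arithProg x₀ δ L : Set (ZMod N)).indicator (1 : ZMod N → ℂ)) ξ‖ ^ p ≤
      N ^ p * ((if ξ = 0 then 1 else 0) + (((-δ * ξ).val : ℝ) ^ p)⁻¹ +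
        (((δ * ξ).val : ℝ) ^ p)⁻¹) := by
  by_cases hξ : ξ = 0
  · have hcard : #(arithProg x₀ δ L) ≤ N := (card_le_univ _).trans (ZMod.card N).le
    calc _ ≤ (N : ℝ) ^ p * 1 := by
          rw [mul_one]
          gcongr
          exact (norm_dft_indicator_le_card _ ξ).trans (by exact_mod_cast hcard)
      _ ≤ _ := by
          rw [if_pos hξ]
          gcongr
          exact le_add_of_le_of_nonneg (le_add_of_nonneg_right (by positivity)) (by positivity)
  · rw [norm_dft_indicator_arithProg x₀ hδ hL, if_neg hξ, zero_add, neg_mul]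
    simpa only [neg_neg] using
      norm_geom_sum_stdAddChar_rpow_le (neg_ne_zero.2 (mul_ne_zero hδ hξ)) hp L

theorem sum_norm_dft_indicator_arithProg_rpow_le [Fact N.Prime] (x₀ δ : ZMod N) (L : ℕ)
    {p : ℝ} (hp : 1 < p) :
    ∑ ξ, ‖𝓕 ((arithProg x₀ δ L : Set (ZMod N)).indicator (1 : ZMod N → ℂ)) ξ‖ ^ p ≤
      (1 + 2 * ∑' n : ℕ, ((n : ℝ) ^ p)⁻¹) * N ^ p := by
  set Z := ∑' n : ℕ, ((n : ℝ) ^ p)⁻¹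
  have hZ : 0 ≤ Z := tsum_nonneg fun n => by positivity
  have hN : (1 : ℝ) ≤ N := by exact_mod_cast Nat.one_le_of_lt (Fact.out : N.Prime).one_lt
  by_cases hδ : δ = 0
  · have hS : #(arithProg x₀ δ L) ≤ 1 := card_le_one.2 fun x hx y hy => by simp_all [arithProg]
    calc _ ≤ ∑ _ξ : ZMod N, (1 : ℝ) := by
          gcongr with ξ
          refine Real.rpow_le_one (norm_nonneg _) ?_ (by linarith)
          exact (norm_dft_indicator_le_card _ ξ).trans (by exact_mod_cast hS)
      _ = (N : ℝ) ^ (1 : ℝ) := by simp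
      _ ≤ 1 * N ^ p := by rw [one_mul]; exact Real.rpow_le_rpow_of_exponent_le hN hp.le
      _ ≤ (1 + 2 * Z) * N ^ p := by gcongr; linarith
  rw [arithProg_eq_arithProg_min]
  calc _ ≤ ∑ ξ : ZMod N, N ^ p * ((if ξ = 0 then 1 else 0) + (((-δ * ξ).val : ℝ) ^ p)⁻¹ +
          (((δ * ξ).val : ℝ) ^ p)⁻¹) := by
        gcongr with ξ
        exact norm_dft_indicator_arithProg_rpow_le x₀ hδ (min_le_right L N) (by linarith) ξ
    _ ≤ N ^ p * (1 + Z + Z) := by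
        rw [← mul_sum, sum_add_distrib, sum_add_distrib, sum_ite_eq' univ (0 : ZMod N),
          if_pos (mem_univ _)]
        gcongr
        · exact sum_inv_val_mul_rpow_le_tsum (neg_ne_zero.2 hδ) hp
        · exact sum_inv_val_mul_rpow_le_tsum hδ hp
    _ = (1 + 2 * Z) * N ^ p := by ring

end ZMod

open ZMod in
/-- There is an absolute constant `C > 0` so that for every prime `N`, every
`a : ℤ/Nℤ → ℂ`, and every arithmetic progression `P ⊆ [N]` (with first term `a₀`,
common difference `d` and length `L`), one has
`|E_{n∈[N]} 1_P(n) a(n)| ≤ C ‖a‖_{U²(ℤ_N)}`. -/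
theorem stmt_5 :
    ∃ C : ℝ, 0 < C ∧
      ∀ (N : ℕ) [NeZero N], N.Prime →
        ∀ (a : ZMod N → ℂ) (a₀ d L : ℕ),
          (∀ k < L, a₀ + k * d ∈ Finset.Icc 1 N) →
          ‖(∑ n ∈ Finset.Icc 1 N,
              if n ∈ (Finset.range L).image (fun k => a₀ + k * d) then a (n : ZMod N) else 0)
            / (N : ℂ)‖ ≤ C * gowersNorm N 2 a := by
  set K : ℝ := 1 + 2 * ∑' n : ℕ, ((n : ℝ) ^ (4 / 3 : ℝ))⁻¹
  have hK : 0 < K := by positivity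
  refine ⟨K ^ (3 / 4 : ℝ), by positivity, fun N _ hN a a₀ d L hP => ?_⟩
  have := Fact.mk hN
  have hQ : (range L).image (fun k => a₀ + k * d) ⊆ Icc 1 N := by
    simpa [image_subset_iff] using hP
  have hS : ((range L).image fun k => a₀ + k * d).image (Nat.cast : ℕ → ZMod N) =
      arithProg (a₀ : ZMod N) d L := by
    simp [arithProg, image_image, Function.comp_def]
  have hN0 : (0 : ℝ) < N := by exact_mod_cast hN.pos
  have hFourierAP := sum_norm_dft_indicator_arithProg_rpow_le (a₀ : ZMod N) (d : ZMod N) L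
    (p := 4 / 3) (by norm_num)
  rw [sum_Icc_ite_mem_eq_sum_image hQ, hS, ← sum_mul_conj_indicator]
  refine (norm_sum_div_le_gowersNorm_mul _ _).trans ?_
  calc gowersNorm N 2 a * (∑ ξ, ‖𝓕 _ ξ‖ ^ (4 / 3 : ℝ)) ^ (3 / 4 : ℝ) / N
      ≤ gowersNorm N 2 a * (K * N ^ (4 / 3 : ℝ)) ^ (3 / 4 : ℝ) / N := by
        have : 0 ≤ gowersNorm N 2 a := by rw [gowersNorm_two_eq]; positivity
        gcongr
    _ = K ^ (3 / 4 : ℝ) * gowersNorm N 2 a := by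
        rw [Real.mul_rpow hK.le (by positivity), ← Real.rpow_mul hN0.le]
        field_simp
        norm_num
end

section
/- Let Θ be a finitely generated nilpotent group and Λ a subgroup of Θ. Suppose that for every γ ∈ Θ there exists n ≥ 1 with γⁿ ∈ Λ. Then Λ has finite index in Θ. -/
/-- Commutators of elements of `Λ ⊔ center G` lie in `Λ`. -/
private lemma comm_mem_aux {G : Type*} [Group G] (Λ : Subgroup G) {x y : G}
    (hx : x ∈ Λ ⊔ Subgroup.center G) (hy : y ∈ Λ ⊔ Subgroup.center G) :
    x * y * x⁻¹ * y⁻¹ ∈ Λ := by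
  rw [← SetLike.mem_coe, Subgroup.mul_normal] at hx hy
  obtain ⟨a, ha, z, hz, rfl⟩ := hx
  obtain ⟨b, hb, w, hw, rfl⟩ := hy
  have hconj : ∀ u ∈ Subgroup.center G, ∀ g : G, u * g * u⁻¹ = g := by
    intro u hu g
    rw [show u * g = g * u from (Subgroup.mem_center_iff.mp hu g).symm,
      mul_inv_cancel_right]
  have key : a * z * (b * w) * (a * z)⁻¹ * (b * w)⁻¹ = a * b * a⁻¹ * b⁻¹ := by
    calc a * z * (b * w) * (a * z)⁻¹ * (b * w)⁻¹
        = a * (z * (b * w) * z⁻¹) * a⁻¹ * (b * w)⁻¹ := by group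
      _ = a * (b * w) * a⁻¹ * (b * w)⁻¹ := by rw [hconj z hz]
      _ = a * (b * (w * a⁻¹ * w⁻¹) * b⁻¹) := by group
      _ = a * (b * a⁻¹ * b⁻¹) := by rw [hconj w hw]
      _ = a * b * a⁻¹ * b⁻¹ := by group
  rw [key]
  exact Λ.mul_mem (Λ.mul_mem (Λ.mul_mem ha hb) (Λ.inv_mem ha)) (Λ.inv_mem hb)

private lemma aux_ind : ∀ (n : ℕ) (Θ : Type*) [Group Θ] [Group.FG Θ]
    [Group.IsNilpotent Θ], Group.nilpotencyClass Θ ≤ n →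
    ∀ (Λ : Subgroup Θ), (∀ γ : Θ, ∃ m : ℕ, 1 ≤ m ∧ γ ^ m ∈ Λ) → Λ.FiniteIndex := by
  intro n
  induction n with
  | zero =>
    intro Θ _ _ _ hc Λ _
    have : Subsingleton Θ := nilpotencyClass_zero_iff_subsingleton.mp (Nat.le_zero.mp hc)
    have : Finite Θ := Finite.of_subsingleton
    infer_instance
  | succ n ih =>
    intro Θ _ _ _ hc Λ h
    set Z := Subgroup.center Θ with hZ
    let π : Θ →* Θ ⧸ Z := QuotientGroup.mk' Z
    haveI : Group.FG (Θ ⧸ Z) := Group.fg_of_surjective (QuotientGroup.mk'_surjective Z)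
    -- apply the inductive hypothesis to the quotient by the center
    have hcq : Group.nilpotencyClass (Θ ⧸ Z) ≤ n := by
      rw [nilpotencyClass_quotient_center]
      omega
    have hmap : ∀ q : Θ ⧸ Z, ∃ m : ℕ, 1 ≤ m ∧ q ^ m ∈ Λ.map π := by
      intro q
      obtain ⟨γ, rfl⟩ := QuotientGroup.mk'_surjective Z q
      obtain ⟨m, hm1, hm⟩ := h γ
      exact ⟨m, hm1, by
        rw [← map_pow]
        exact Subgroup.mem_map_of_mem π hm⟩
    have hQ : (Λ.map π).FiniteIndex := ih (Θ ⧸ Z) hcq (Λ.map π) hmap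
    -- `K = Λ ⊔ Z` has finite index in `Θ`
    set K : Subgroup Θ := Λ ⊔ Z with hK
    have hKeq : K = (Λ.map π).comap π := by
      rw [Subgroup.comap_map_eq, QuotientGroup.ker_mk']
    have hKind : K.index ≠ 0 := by
      rw [hKeq, Subgroup.index_comap_of_surjective _ (QuotientGroup.mk'_surjective Z)]
      exact hQ.index_ne_zero
    haveI hKfi : K.FiniteIndex := ⟨hKind⟩
    haveI : Group.FG K := Subgroup.fg_of_index_ne_zero K
    -- `Λ` is a normal subgroup of `K` with abelian torsion quotient
    set Λ' : Subgroup K := Λ.subgroupOf K with hΛ'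
    have hΛK : Λ ≤ K := le_sup_left
    haveI : Λ'.Normal := by
      constructor
      intro m hm g
      rw [Subgroup.mem_subgroupOf] at hm ⊢
      have := comm_mem_aux Λ g.2 (hΛK hm)
      have h2 : ((g * m * g⁻¹ * m⁻¹ : K) : Θ) * (m : Θ) ∈ Λ := Λ.mul_mem this hm
      simpa [mul_assoc] using h2
    letI : CommGroup (K ⧸ Λ') :=
      { (inferInstance : Group (K ⧸ Λ')) with
        mul_comm := by
          intro a b
          induction a using QuotientGroup.induction_on with | H x =>
          induction b using QuotientGroup.induction_on with | H y =>
          rw [← QuotientGroup.mk_mul, ← QuotientGroup.mk_mul, QuotientGroup.eq]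
          rw [Subgroup.mem_subgroupOf]
          have := comm_mem_aux Λ (y⁻¹ : K).2 (x⁻¹ : K).2
          simpa [mul_assoc] using this }
    haveI : Group.FG (K ⧸ Λ') := Group.fg_of_surjective (QuotientGroup.mk'_surjective Λ')
    have htors : Monoid.IsTorsion (K ⧸ Λ') := by
      intro q
      obtain ⟨k, rfl⟩ := QuotientGroup.mk'_surjective Λ' q
      obtain ⟨m, hm1, hm⟩ := h (k : Θ)
      have hmem : k ^ m ∈ Λ' := by
        rw [Subgroup.mem_subgroupOf]
        simpa using hm
      refine isOfFinOrder_iff_pow_eq_one.mpr ⟨m, hm1, ?_⟩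
      rw [← map_pow, QuotientGroup.mk'_apply, QuotientGroup.eq_one_iff]
      exact hmem
    haveI : Finite (K ⧸ Λ') := CommGroup.finite_of_fg_torsion _ htors
    have hrel : Λ.relIndex K ≠ 0 := Subgroup.index_ne_zero_of_finite
    constructor
    rw [← Subgroup.relIndex_mul_index hΛK]
    exact Nat.mul_ne_zero hrel hKind

/-- A subgroup `Λ` of a finitely generated nilpotent group `Θ` such that every
element of `Θ` has some positive power in `Λ` has finite index in `Θ`. -/
theorem stmt_8 (Θ : Type*) [Group Θ] [Group.FG Θ] [Group.IsNilpotent Θ]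
    (Λ : Subgroup Θ) (h : ∀ γ : Θ, ∃ n : ℕ, 1 ≤ n ∧ γ ^ n ∈ Λ) :
    Λ.FiniteIndex := by
  exact aux_ind (Group.nilpotencyClass Θ) Θ le_rfl Λ h
end

section
/- Let G be an s-step nilpotent group and H a subgroup of G × G. Suppose there exist distinct positive integers p, q and normal subgroups G¹, …, G^d of G such that (i) G = G¹ ⋯ G^d, and (ii) {(g₁^p g₂^{p²} ⋯ g_d^{p^d}, g₁^q g₂^{q²} ⋯ g_d^{q^d}) : g₁ ∈ G¹, …, g_d ∈ G^d} ⊆ H · (G₂ × G₂), where G₂ = [G,G]. Then the set U := {g ∈ G_s : (g^{p^j}, g^{q^j}) ∈ H for some j ≥ 1} generates G_s, where G_s is the s-th term of the lower central series of G. -/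
/-!
Write `γ k` for Mathlib's `(⊤ : Subgroup _).lowerCentralSeries k`, the paper's `G_{k+1}`, and let
`U_k = powPairSet H p q k` be the set of `g ∈ γ k` with `(g^{p^j}, g^{q^j}) ∈ H ⊔ γ (k+1)` in
`G × G` for some `j ≥ 1`. Taking all but one `gᵢ` trivial in (ii) puts every `Gⁱ` inside `U_0`.

Modulo `γ (k+2)` the commutator `γ k × G → γ (k+1)` is bimultiplicative; it is unchanged when its
first argument moves by `γ (k+1)` and, by the three subgroups lemma, when its second moves by
`γ 1`. Hence for `w ∈ U_k` and `y ∈ U_0`, with witnesses `j` and `b`, the commutator of the two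
pairs in `G × G` is `(⁅w, y⁆^{p^{j+b}}, ⁅w, y⁆^{q^{j+b}})` up to `γ (k+2)`, and it lies in
`H ⊔ γ (k+2)`: so `⁅w, y⁆ ∈ U_{k+1}`. As the `Gⁱ` generate `G`, induction shows that `γ k` is generated by `U_k`
modulo `γ (k+1)`. For `k = s - 1` the modulus `γ s` is trivial and `U_{s-1}` is the set `U`.
-/

open Subgroup
open scoped commutatorElement

section CommutatorCalculus

variable {K : Type*} [Group K]

theorem Subgroup.commutator_commutator_le_of_rotate {H₁ H₂ H₃ N : Subgroup K} [N.Normal]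
    (h1 : ⁅⁅H₂, H₃⁆, H₁⁆ ≤ N) (h2 : ⁅⁅H₃, H₁⁆, H₂⁆ ≤ N) : ⁅⁅H₁, H₂⁆, H₃⁆ ≤ N := by
  rw [← QuotientGroup.ker_mk' N, ← map_eq_bot_iff] at h1 h2 ⊢
  simp only [map_commutator] at h1 h2 ⊢
  exact commutator_commutator_eq_bot_of_rotate h1 h2

theorem Subgroup.commutator_lowerCentralSeries_one_le (k : ℕ) :
    ⁅(⊤ : Subgroup K).lowerCentralSeries k, (⊤ : Subgroup K).lowerCentralSeries 1⁆ ≤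
      (⊤ : Subgroup K).lowerCentralSeries (k + 2) := by
  rw [commutator_comm]
  refine commutator_commutator_le_of_rotate ?_ le_rfl
  rw [commutator_comm ⊤]
  exact le_rfl

theorem commute_mk_of_mem_lowerCentralSeries_succ {k : ℕ} {z : K}
    (hz : z ∈ (⊤ : Subgroup K).lowerCentralSeries (k + 1))
    (g : K ⧸ (⊤ : Subgroup K).lowerCentralSeries (k + 2)) : Commute (z : K ⧸ _) g := by
  induction g using QuotientGroup.induction_on with
  | H g =>
    rw [← commutatorElement_eq_one_iff_commute, ← QuotientGroup.mk'_apply,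
      ← QuotientGroup.mk'_apply, ← map_commutatorElement, QuotientGroup.mk'_apply,
      QuotientGroup.eq_one_iff]
    exact commutator_mem_commutator hz (mem_top g)

def commutatorRightHom {k : ℕ} {x : K} (hx : x ∈ (⊤ : Subgroup K).lowerCentralSeries k) :
    K →* K ⧸ (⊤ : Subgroup K).lowerCentralSeries (k + 2) :=
  MonoidHom.mk' (fun a => ((⁅x, a⁆ : K) : K ⧸ _)) fun a b => by
    have hb := commute_mk_of_mem_lowerCentralSeries_succ
      (commutator_mem_commutator hx (mem_top b)) (a : K ⧸ _)
    rw [commutatorElement_mul_right_eq_mul_conj x a b, QuotientGroup.mk_mul, QuotientGroup.mk_mul,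
      QuotientGroup.mk_mul, QuotientGroup.mk_inv,
      mul_assoc _ (a : K ⧸ (⊤ : Subgroup K).lowerCentralSeries (k + 2)), ← hb.eq, ← mul_assoc,
      mul_inv_cancel_right]

def commutatorLeftHom (k : ℕ) (a : K) :
    (⊤ : Subgroup K).lowerCentralSeries k →* K ⧸ (⊤ : Subgroup K).lowerCentralSeries (k + 2) :=
  MonoidHom.mk' (fun x => ((⁅(x : K), a⁆ : K) : K ⧸ _)) fun x y => by
    have hy := commute_mk_of_mem_lowerCentralSeries_succ
      (commutator_mem_commutator y.2 (mem_top a))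
    simp only [coe_mul, commutatorElement_mul_left_eq_conj_mul (x : K) y a,
      QuotientGroup.mk_mul, QuotientGroup.mk_inv, (hy _).symm.mul_inv_cancel, (hy _).eq]

theorem mk_commutatorElement_pow_pow {k : ℕ} {x : K}
    (hx : x ∈ (⊤ : Subgroup K).lowerCentralSeries k) (a : K) (e m : ℕ) :
    ((⁅x ^ e, a ^ m⁆ : K) : K ⧸ (⊤ : Subgroup K).lowerCentralSeries (k + 2)) =
      (⁅x, a⁆ : K) ^ (e * m) :=
  calc ((⁅x ^ e, a ^ m⁆ : K) : K ⧸ _) = commutatorRightHom (pow_mem hx e) (a ^ m) := rfl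
    _ = commutatorLeftHom k a (⟨x, hx⟩ ^ e) ^ m := map_pow _ _ _
    _ = _ := by rw [map_pow, ← pow_mul]; rfl

theorem commutatorElement_mem_sup_lowerCentralSeries {H : Subgroup K} {k : ℕ} {X Y : K}
    (hXk : X ∈ (⊤ : Subgroup K).lowerCentralSeries k)
    (hX : X ∈ H ⊔ (⊤ : Subgroup K).lowerCentralSeries (k + 1))
    (hY : Y ∈ H ⊔ (⊤ : Subgroup K).lowerCentralSeries 1) :
    ⁅X, Y⁆ ∈ H ⊔ (⊤ : Subgroup K).lowerCentralSeries (k + 2) := by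
  obtain ⟨h, hh, δ, hδ, rfl⟩ := mem_sup_of_normal_right.mp hX
  obtain ⟨h', hh', ε, hε, rfl⟩ := mem_sup_of_normal_right.mp hY
  have hhk : h ∈ (⊤ : Subgroup K).lowerCentralSeries k := by
    simpa using mul_mem hXk (inv_mem (Subgroup.lowerCentralSeries_antitone _ k.le_succ hδ))
  have hN : (⊤ : Subgroup K).lowerCentralSeries (k + 2) ≤ H ⊔ _ := le_sup_right
  rw [commutatorElement_mul_left_eq_conj_mul h δ, commutatorElement_mul_right_eq_mul_conj h h' ε,
    mul_assoc _ h', mul_assoc _ _ h'⁻¹]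
  refine mul_mem (hN (Normal.conj_mem inferInstance _ ?_ h)) (mul_mem ?_ (hN ?_))
  · exact commutator_mem_commutator hδ (mem_top _)
  · exact mem_sup_left (H.commutator_le_self (commutator_mem_commutator hh hh'))
  · exact Normal.conj_mem inferInstance _
      (commutator_lowerCentralSeries_one_le k (commutator_mem_commutator hhk hε)) h'

theorem lowerCentralSeries_succ_le_closure_commutators {S U : Set K} (hS : closure S = ⊤)
    {k : ℕ} (hU : U ⊆ (⊤ : Subgroup K).lowerCentralSeries k)
    (hk : (⊤ : Subgroup K).lowerCentralSeries k ≤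
      closure U ⊔ (⊤ : Subgroup K).lowerCentralSeries (k + 1)) :
    (⊤ : Subgroup K).lowerCentralSeries (k + 1) ≤
      closure (Set.image2 (⁅·, ·⁆) U S) ⊔ (⊤ : Subgroup K).lowerCentralSeries (k + 2) := by
  set M := closure (Set.image2 (⁅·, ·⁆) U S) ⊔ (⊤ : Subgroup K).lowerCentralSeries (k + 2)
  set π := QuotientGroup.mk' ((⊤ : Subgroup K).lowerCentralSeries (k + 2))
  have hM : (M.map π).comap π = M :=
    comap_map_eq_self (by rw [QuotientGroup.ker_mk']; exact le_sup_right)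
  rw [Subgroup.lowerCentralSeries_succ, commutator_le]
  intro x hx g _
  rw [← hM]
  suffices hSM : closure S ≤ (M.map π).comap (commutatorRightHom hx) from hSM (hS ▸ mem_top g)
  refine (closure_le _).mpr fun y hy => ?_
  set A := ((M.map π).comap (commutatorLeftHom k y)).map
    ((⊤ : Subgroup K).lowerCentralSeries k).subtype
  have hUA : closure U ⊔ (⊤ : Subgroup K).lowerCentralSeries (k + 1) ≤ A := by
    refine sup_le ((closure_le _).mpr fun u hu => ⟨⟨u, hU hu⟩, ?_, rfl⟩)
      fun z hz => ⟨⟨z, Subgroup.lowerCentralSeries_antitone _ k.le_succ hz⟩, ?_, rfl⟩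
    · exact mem_map_of_mem π (mem_sup_left (subset_closure (Set.mem_image2_of_mem hu hy)))
    · exact mem_map_of_mem π (mem_sup_right (commutator_mem_commutator hz (mem_top y)))
  obtain ⟨x', hx', rfl⟩ := hUA (hk hx)
  exact hx'

end CommutatorCalculus

theorem List.prod_ofFn_pow_mulSingle {M : Type*} [Monoid M] {n : ℕ} (i : Fin n) (a : M)
    (f : Fin n → ℕ) : (List.ofFn fun j => Pi.mulSingle i a j ^ f j).prod = a ^ f i := by
  induction n with
  | zero => exact i.elim0
  | succ n ih =>
    rw [List.ofFn_succ, List.prod_cons]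
    cases i using Fin.cases with
    | zero => simp [Fin.succ_ne_zero]
    | succ i =>
      rw [Pi.mulSingle_eq_of_ne (Fin.succ_ne_zero i).symm, one_pow, one_mul]
      simpa only [Pi.mulSingle_apply, Fin.succ_inj, Function.comp_apply] using ih i (f ∘ Fin.succ)

section PowPairs

variable {G : Type*} [Group G] (H : Subgroup (G × G)) (p q : ℕ)

def powPairSet (k : ℕ) : Set G :=
  {g | g ∈ (⊤ : Subgroup G).lowerCentralSeries k ∧ ∃ j : ℕ, 1 ≤ j ∧
    (g ^ p ^ j, g ^ q ^ j) ∈ H ⊔ (⊤ : Subgroup (G × G)).lowerCentralSeries (k + 1)}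

variable {H p q}

theorem powPairSet_eq_of_lowerCentralSeries_succ_eq_bot {k : ℕ}
    (hk : (⊤ : Subgroup G).lowerCentralSeries (k + 1) = ⊥) :
    powPairSet H p q k = {g | g ∈ (⊤ : Subgroup G).lowerCentralSeries k ∧
      ∃ j : ℕ, 1 ≤ j ∧ (g ^ p ^ j, g ^ q ^ j) ∈ H} := by
  rw [powPairSet, top_lowerCentralSeries_prod, hk, bot_prod_bot, sup_bot_eq]

theorem commutatorElement_mem_powPairSet {k : ℕ} {w y : G} (hw : w ∈ powPairSet H p q k)
    (hy : y ∈ powPairSet H p q 0) : ⁅w, y⁆ ∈ powPairSet H p q (k + 1) := by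
  obtain ⟨hwk, j, hj, hwH⟩ := hw
  obtain ⟨-, b, hb, hyH⟩ := hy
  refine ⟨commutator_mem_commutator hwk (mem_top y), j + b, by omega, ?_⟩
  set X : G × G := (w ^ p ^ j, w ^ q ^ j)
  set Y : G × G := (y ^ p ^ b, y ^ q ^ b)
  have hXk : X ∈ (⊤ : Subgroup (G × G)).lowerCentralSeries k := by
    rw [top_lowerCentralSeries_prod]
    exact ⟨pow_mem hwk _, pow_mem hwk _⟩
  have hpow : ∀ r : ℕ, ⁅w ^ r ^ j, y ^ r ^ b⁆⁻¹ * ⁅w, y⁆ ^ r ^ (j + b) ∈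
      (⊤ : Subgroup G).lowerCentralSeries (k + 2) := fun r => by
    rw [← QuotientGroup.eq, mk_commutatorElement_pow_pow hwk, QuotientGroup.mk_pow, pow_add]
  have hmod : ⁅X, Y⁆⁻¹ * (⁅w, y⁆ ^ p ^ (j + b), ⁅w, y⁆ ^ q ^ (j + b)) ∈
      (⊤ : Subgroup (G × G)).lowerCentralSeries (k + 2) := by
    rw [top_lowerCentralSeries_prod]
    exact ⟨hpow p, hpow q⟩
  have := mul_mem (commutatorElement_mem_sup_lowerCentralSeries hXk hwH hyH)
    (mem_sup_right hmod : _ ∈ H ⊔ _)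
  rwa [mul_inv_cancel_left] at this

theorem lowerCentralSeries_le_closure_powPairSet {S : Set G} (hS : closure S = ⊤)
    (hS₀ : S ⊆ powPairSet H p q 0) (k : ℕ) :
    (⊤ : Subgroup G).lowerCentralSeries k ≤
      closure (powPairSet H p q k) ⊔ (⊤ : Subgroup G).lowerCentralSeries (k + 1) := by
  induction k with
  | zero => exact le_sup_of_le_left (hS ▸ Subgroup.closure_mono hS₀)
  | succ k ih =>
    refine (lowerCentralSeries_succ_le_closure_commutators hS (fun g hg => hg.1) ih).trans
      (sup_le_sup_right (Subgroup.closure_mono ?_) _)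
    rintro _ ⟨w, hw, y, hy, rfl⟩
    exact commutatorElement_mem_powPairSet hw (hS₀ hy)

end PowPairs

theorem stmt_9_general {G : Type*} [Group G] (s : ℕ)
    (hnil : (⊤ : Subgroup G).lowerCentralSeries s = ⊥)
    (H : Subgroup (G × G)) (p q d : ℕ)
    (Gs : Fin d → Subgroup G)
    (hgen : ∀ g : G, ∃ c : Fin d → G, (∀ i, c i ∈ Gs i) ∧ g = (List.ofFn c).prod)
    (hH : ∀ c : Fin d → G, (∀ i, c i ∈ Gs i) →
        ∃ h : G × G, h ∈ H ∧ ∃ u ∈ (⊤ : Subgroup G).lowerCentralSeries 1, ∃ v ∈ (⊤ : Subgroup G).lowerCentralSeries 1,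
          ((List.ofFn fun i => c i ^ p ^ (i.val + 1)).prod,
           (List.ofFn fun i => c i ^ q ^ (i.val + 1)).prod) = h * (u, v)) :
    Subgroup.closure
        {g : G | g ∈ (⊤ : Subgroup G).lowerCentralSeries (s - 1) ∧
          ∃ j : ℕ, 1 ≤ j ∧ (g ^ p ^ j, g ^ q ^ j) ∈ H}
      = (⊤ : Subgroup G).lowerCentralSeries (s - 1) := by
  have hS : closure (⋃ i, (Gs i : Set G)) = ⊤ := by
    refine eq_top_iff.mpr fun g _ => ?_
    obtain ⟨c, hc, rfl⟩ := hgen g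
    refine list_prod_mem fun y hy => ?_
    obtain ⟨i, rfl⟩ := List.mem_ofFn.mp hy
    exact subset_closure (Set.mem_iUnion_of_mem i (hc i))
  have hS₀ : (⋃ i, (Gs i : Set G)) ⊆ powPairSet H p q 0 := by
    refine Set.iUnion_subset fun i a (ha : a ∈ Gs i) => ?_
    obtain ⟨h, hh, u, hu, v, hv, huv⟩ := hH (Pi.mulSingle i a) fun i' => by
      rcases eq_or_ne i' i with rfl | hi' <;> simp [*, one_mem]
    refine ⟨mem_top a, i.val + 1, by omega, ?_⟩
    rw [← List.prod_ofFn_pow_mulSingle i a (fun i' => p ^ (i'.val + 1)),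
      ← List.prod_ofFn_pow_mulSingle i a (fun i' => q ^ (i'.val + 1)), huv]
    exact mul_mem_sup hh (by rw [top_lowerCentralSeries_prod]; exact ⟨hu, hv⟩)
  have hbot : (⊤ : Subgroup G).lowerCentralSeries (s - 1 + 1) = ⊥ :=
    le_bot_iff.mp (hnil ▸ Subgroup.lowerCentralSeries_antitone _ (by omega))
  refine le_antisymm ((closure_le _).mpr fun g hg => hg.1) ?_
  have := lowerCentralSeries_le_closure_powPairSet hS hS₀ (s - 1)
  rwa [powPairSet_eq_of_lowerCentralSeries_succ_eq_bot hbot, hbot, sup_bot_eq] at this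

/-- Let `G` be an `s`-step nilpotent group (so `G_{s+1} = 1` where
`G_i = lowerCentralSeries G (i-1)` in Mathlib's indexing) and `H ≤ G × G`.
Suppose there are distinct positive integers `p ≠ q` and normal subgroups
`G¹,…,G^d` of `G` with `G = G¹⋯G^d` and
`{(g₁^p⋯g_d^{p^d}, g₁^q⋯g_d^{q^d}) : gᵢ ∈ Gⁱ} ⊆ H·(G₂×G₂)`.
Then `{g ∈ G_s : (g^{p^j}, g^{q^j}) ∈ H for some j ≥ 1}` generates `G_s`. -/
theorem stmt_9 {G : Type*} [Group G] (s : ℕ) (hs : 1 ≤ s)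
    (hnil : (⊤ : Subgroup G).lowerCentralSeries s = ⊥)
    (H : Subgroup (G × G)) (p q d : ℕ) (hp : 0 < p) (hq : 0 < q) (hpq : p ≠ q)
    (hd : 1 ≤ d) (Gs : Fin d → Subgroup G) (hnorm : ∀ i, (Gs i).Normal)
    (hgen : ∀ g : G, ∃ c : Fin d → G, (∀ i, c i ∈ Gs i) ∧ g = (List.ofFn c).prod)
    (hH : ∀ c : Fin d → G, (∀ i, c i ∈ Gs i) →
        ∃ h : G × G, h ∈ H ∧ ∃ u ∈ (⊤ : Subgroup G).lowerCentralSeries 1, ∃ v ∈ (⊤ : Subgroup G).lowerCentralSeries 1,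
          ((List.ofFn fun i => c i ^ p ^ (i.val + 1)).prod,
           (List.ofFn fun i => c i ^ q ^ (i.val + 1)).prod) = h * (u, v)) :
    Subgroup.closure
        {g : G | g ∈ (⊤ : Subgroup G).lowerCentralSeries (s - 1) ∧
          ∃ j : ℕ, 1 ≤ j ∧ (g ^ p ^ j, g ^ q ^ j) ∈ H}
      = (⊤ : Subgroup G).lowerCentralSeries (s - 1) :=
  stmt_9_general s hnil H p q d Gs hgen hH
end

section
/- Let f : ℕ → ℂ be a multiplicative function with |f| ≤ 1, and suppose f has mean value zero along every infinite arithmetic progression, i.e., lim_{N→∞} E_{n∈[N]} f(an+b) = 0 for all a, b ∈ ℕ. Then for every Dirichlet character χ, lim_{N→∞} E_{n∈[N]} f(n)·χ(n) = 0. Conversely, if f·χ has mean zero for every Dirichlet character χ, then E_{n∈[N]} f(n)·e(np/q) → 0 for all p, q ∈ ℕ, and hence f has mean zero along every infinite arithmetic progression. -/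
/-!
If `f` has mean zero along every progression `a n + b` with `b ≥ 1`, it has mean zero on every
residue class, hence against every periodic weight, in particular against Dirichlet characters
(a character modulo `0` is supported on `n = 1`).

Conversely, write `n = d m` with every prime factor of `d` dividing `q` and `m` coprime to `q`.
For a `q`-periodic weight `W` we have `f (d m) W (d m) = f d * f m * W (d m)`, and on `m` coprime
to `q` the function `m ↦ W (d m)` is a combination of Dirichlet characters modulo `q`. So the
average of `f W` up to `N` is a sum over such `d` of terms built from the averages of `f χ` up to
`N / d`. Each term tends to `0` and is `O(1 / d)`, which is summable over these `d` by the Euler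
product, so Tannery's theorem concludes. Rational phases `e(n p / q)` and indicators of residue
classes are periodic weights, and the latter give back the progressions.
-/

open Finset Filter Asymptotics Topology

def HasMeanZero (g : ℕ → ℂ) : Prop :=
  Tendsto (fun N : ℕ => (∑ n ∈ Icc 1 N, g n) / (N : ℂ)) atTop (𝓝 0)

theorem isLittleO_natCast_iff_tendsto {S : ℕ → ℂ} (hS : S 0 = 0) :
    S =o[atTop] (fun N : ℕ => (N : ℝ)) ↔ Tendsto (fun N : ℕ => S N / (N : ℂ)) atTop (𝓝 0) := by
  rw [← isLittleO_iff_tendsto fun N hN => by rwa [Nat.cast_eq_zero.1 hN],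
    ← isLittleO_norm_right (g' := fun N : ℕ => (N : ℂ))]
  simp only [Complex.norm_natCast]

theorem hasMeanZero_iff_isLittleO {g : ℕ → ℂ} :
    HasMeanZero g ↔ (fun N => ∑ n ∈ Icc 1 N, g n) =o[atTop] (fun N : ℕ => (N : ℝ)) :=
  (isLittleO_natCast_iff_tendsto (by simp)).symm

theorem isLittleO_const_natCast {E : Type*} [NormedAddCommGroup E] (c : E) :
    (fun _ : ℕ => c) =o[atTop] (fun N : ℕ => (N : ℝ)) :=
  (isLittleO_const_id_atTop c).comp_tendsto tendsto_natCast_atTop_atTop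

theorem Asymptotics.IsLittleO.comp_of_le_mul {E : Type*} [SeminormedAddCommGroup E] {S : ℕ → E}
    (hS : S =o[atTop] (fun M : ℕ => (M : ℝ))) {u : ℕ → ℕ} (c : ℕ)
    (hu : ∀ᶠ N in atTop, u N ≤ c * N) :
    (fun N => S (u N)) =o[atTop] (fun N : ℕ => (N : ℝ)) := by
  refine isLittleO_iff.2 fun ε hε => ?_
  set δ := ε / (2 * (c + 1))
  have hδ : 0 < δ := by positivity
  obtain ⟨M₀, hM₀⟩ := eventually_atTop.1 (isLittleO_iff.1 hS hδ)
  set C := ∑ M ∈ range M₀, ‖S M‖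
  -- finitely many exceptional values are absorbed into the constant `C`
  have hbound : ∀ M, ‖S M‖ ≤ δ * M + C := by
    intro M
    have hC : 0 ≤ C := sum_nonneg fun _ _ => norm_nonneg _
    rcases lt_or_ge M M₀ with h | h
    · have := single_le_sum (fun i _ => norm_nonneg (S i)) (mem_range.2 h)
      have : 0 ≤ δ * M := by positivity
      linarith
    · have := hM₀ M h
      rw [Real.norm_natCast] at this
      linarith
  have hδc : δ * c ≤ ε / 2 := by
    rw [div_mul_eq_mul_div, div_le_div_iff₀ (by positivity) two_pos]
    nlinarith
  filter_upwards [hu, tendsto_natCast_atTop_atTop.eventually_ge_atTop (2 * C / ε)]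
    with N huN hCN
  rw [Real.norm_natCast]
  rw [div_le_iff₀ hε] at hCN
  have huN' : (u N : ℝ) ≤ c * N := by exact_mod_cast huN
  calc ‖S (u N)‖ ≤ δ * (c * N) + C := (hbound _).trans (by gcongr)
    _ ≤ ε / 2 * N + ε / 2 * N := by nlinarith [(N.cast_nonneg : (0 : ℝ) ≤ N)]
    _ = ε * N := by ring

theorem HasMeanZero.const_mul {g : ℕ → ℂ} (h : HasMeanZero g) (c : ℂ) :
    HasMeanZero fun n => c * g n := by
  simpa only [HasMeanZero, ← mul_sum, mul_div_assoc, mul_zero] using Tendsto.const_mul c h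

theorem HasMeanZero.sum {ι : Type*} (s : Finset ι) {g : ι → ℕ → ℂ}
    (h : ∀ i ∈ s, HasMeanZero (g i)) : HasMeanZero fun n => ∑ i ∈ s, g i n := by
  simpa only [HasMeanZero, sum_comm (s := Icc 1 _), sum_div, sum_const_zero]
    using tendsto_finsetSum s h

theorem hasMeanZero_of_eventually_eq_zero {g : ℕ → ℂ} (hg : ∀ᶠ n in atTop, g n = 0) :
    HasMeanZero g := by
  obtain ⟨n₀, hn₀⟩ := eventually_atTop.1 hg
  rw [hasMeanZero_iff_isLittleO]
  refine (isLittleO_const_natCast (∑ n ∈ Icc 1 n₀, g n)).congr' ?_ EventuallyEq.rfl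
  filter_upwards [eventually_ge_atTop n₀] with N hN
  refine sum_subset (Icc_subset_Icc_right hN) fun n hn hn' => hn₀ n ?_
  simp only [mem_Icc, not_and, not_le] at hn hn'
  exact (hn' hn.1).le

theorem sum_Icc_filter_modEq {M : Type*} [AddCommMonoid M] (g : ℕ → M) {a b N : ℕ}
    (ha : 0 < a) (hbN : b ≤ N) :
    ∑ n ∈ Icc 1 N with n ≡ b [MOD a], g n =
      ∑ n ∈ Icc 1 b with n ≡ b [MOD a], g n + ∑ m ∈ Icc 1 ((N - b) / a), g (a * m + b) := by
  have hsplit : Icc 1 N = Icc 1 b ∪ Ioc b N := by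
    ext n; simp only [mem_union, mem_Icc, mem_Ioc]; omega
  have himage : {n ∈ Ioc b N | n ≡ b [MOD a]} = (Icc 1 ((N - b) / a)).image (a * · + b) := by
    ext n
    simp only [mem_filter, mem_Ioc, mem_image, mem_Icc, Nat.le_div_iff_mul_le ha]
    constructor
    · rintro ⟨⟨hbn, hnN⟩, hmod⟩
      obtain ⟨m, hm⟩ := (Nat.modEq_iff_dvd' hbn.le).1 hmod.symm
      refine ⟨m, ⟨Nat.pos_of_ne_zero ?_, ?_⟩, by omega⟩
      · rintro rfl
        omega
      · rw [mul_comm]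
        omega
    · rintro ⟨m, ⟨hm1, hmN⟩, rfl⟩
      refine ⟨⟨?_, ?_⟩, ?_⟩
      · nlinarith
      · nlinarith [Nat.sub_add_cancel hbN]
      · simp [Nat.ModEq]
  rw [hsplit, filter_union, sum_union, himage, sum_image]
  · intro m _ m' _ h
    simpa [ha.ne'] using h
  · exact disjoint_filter_filter (by
      rw [disjoint_left]; intro n; simp only [mem_Icc, mem_Ioc]; omega)

theorem HasMeanZero.ite_modEq {g : ℕ → ℂ} {a b : ℕ} (ha : 0 < a)
    (h : HasMeanZero fun m => g (a * m + b)) :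
    HasMeanZero fun n => if n ≡ b [MOD a] then g n else 0 := by
  rw [hasMeanZero_iff_isLittleO] at h ⊢
  have hsum : (fun N => ∑ n ∈ Icc 1 N, if n ≡ b [MOD a] then g n else 0) =ᶠ[atTop]
      fun N => ∑ n ∈ Icc 1 b with n ≡ b [MOD a], g n +
        ∑ m ∈ Icc 1 ((N - b) / a), g (a * m + b) := by
    filter_upwards [eventually_ge_atTop b] with N hN
    rw [← sum_filter, sum_Icc_filter_modEq g ha hN]
  refine IsLittleO.congr' ?_ hsum.symm EventuallyEq.rfl
  refine (isLittleO_const_natCast _).add (h.comp_of_le_mul 1 (Eventually.of_forall fun N => ?_))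
  grw [Nat.div_le_self, Nat.sub_le, one_mul]

theorem HasMeanZero.comp_affine {g : ℕ → ℂ} {a b : ℕ} (ha : 0 < a)
    (h : HasMeanZero fun n => if n ≡ b [MOD a] then g n else 0) :
    HasMeanZero fun m => g (a * m + b) := by
  rw [hasMeanZero_iff_isLittleO] at h ⊢
  have hsum : ∀ M, ∑ m ∈ Icc 1 M, g (a * m + b) =
      ∑ n ∈ Icc 1 (a * M + b), (if n ≡ b [MOD a] then g n else 0) -
        ∑ n ∈ Icc 1 b with n ≡ b [MOD a], g n := by
    intro M
    rw [← sum_filter, sum_Icc_filter_modEq g ha (Nat.le_add_left b _),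
      Nat.add_sub_cancel, Nat.mul_div_cancel_left M ha, add_sub_cancel_left]
  simp only [hsum]
  refine (h.comp_of_le_mul (a + b) ?_).sub (isLittleO_const_natCast _)
  filter_upwards [eventually_ge_atTop 1] with M hM
  nlinarith

theorem Function.Periodic.eq_sum_ite_modEq {M : Type*} [AddCommMonoid M] {w : ℕ → M} {q : ℕ}
    (hw : Function.Periodic w q) (hq : 0 < q) (n : ℕ) :
    w n = ∑ r ∈ range q, if n ≡ r [MOD q] then w r else 0 := by
  have hmod : ∀ r ∈ range q, (n ≡ r [MOD q]) ↔ n % q = r := fun r hr => by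
    rw [Nat.ModEq, Nat.mod_eq_of_lt (mem_range.1 hr)]
  rw [sum_congr rfl fun r hr => if_congr (hmod r hr) rfl rfl, sum_ite_eq,
    if_pos (mem_range.2 (Nat.mod_lt n hq)), hw.map_mod_nat]

theorem hasMeanZero_mul_periodic_of_ap {g : ℕ → ℂ}
    (hAP : ∀ a b : ℕ, 1 ≤ a → 1 ≤ b → HasMeanZero fun m => g (a * m + b))
    {w : ℕ → ℂ} {q : ℕ} (hq : 0 < q) (hw : Function.Periodic w q) :
    HasMeanZero fun n => g n * w n := by
  -- the residue class of `r` is that of `r + q`, whose progression starts at a positive index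
  have hres : ∀ r, HasMeanZero fun n => if n ≡ r [MOD q] then g n else 0 := fun r => by
    convert (hAP q (r + q) hq (by omega)).ite_modEq hq using 3
    simp only [Nat.ModEq, Nat.add_mod_right]
  have hexpand : (fun n => g n * w n) =
      fun n => ∑ r ∈ range q, w r * if n ≡ r [MOD q] then g n else 0 := by
    funext n
    rw [hw.eq_sum_ite_modEq hq n, mul_sum]
    refine sum_congr rfl fun r _ => ?_
    split_ifs <;> ring
  rw [hexpand]
  exact HasMeanZero.sum _ fun r _ => (hres r).const_mul (w r)

theorem hasMeanZero_mul_dirichletCharacter_of_ap {g : ℕ → ℂ}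
    (hAP : ∀ a b : ℕ, 1 ≤ a → 1 ≤ b → HasMeanZero fun m => g (a * m + b))
    (q : ℕ) (χ : DirichletCharacter ℂ q) : HasMeanZero fun n => g n * χ n := by
  rcases Nat.eq_zero_or_pos q with rfl | hq
  · refine hasMeanZero_of_eventually_eq_zero ?_
    filter_upwards [eventually_ge_atTop 2] with n hn
    rw [χ.map_nonunit (by rw [ZMod.isUnit_iff_coprime, Nat.coprime_zero_right]; omega), mul_zero]
  · exact hasMeanZero_mul_periodic_of_ap hAP hq fun n => by simp

open Nat in
theorem Nat.dvd_pow_of_mem_factoredNumbers {q d k : ℕ} (hq : q ≠ 0)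
    (hd : d ∈ factoredNumbers q.primeFactors) (hk : d ≤ k) : d ∣ q ^ k := by
  have hd0 := ne_zero_of_mem_factoredNumbers hd
  rw [← factorization_le_iff_dvd hd0 (pow_ne_zero k hq), Finsupp.le_def]
  intro p
  rw [factorization_pow, Finsupp.smul_apply, smul_eq_mul]
  rcases eq_or_ne (d.factorization p) 0 with h | h
  · simp [h]
  have hp : p ∈ q.primeFactors := primeFactors_subset_of_mem_factoredNumbers hd
    (support_factorization d ▸ Finsupp.mem_support_iff.2 h)
  calc d.factorization p ≤ k := (factorization_lt p hd0).le.trans hk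
    _ ≤ k * q.factorization p := Nat.le_mul_of_pos_right k
      ((prime_of_mem_primeFactors hp).factorization_pos_of_dvd hq (dvd_of_mem_primeFactors hp))

/-- The largest divisor of `n` all of whose prime factors divide `q` (for `n, q ≠ 0`): every prime
occurs in `n` with multiplicity below `n`, so the power `q ^ n` is large enough. -/
def smoothPart (q n : ℕ) : ℕ := n.gcd (q ^ n)

theorem smoothPart_dvd (q n : ℕ) : smoothPart q n ∣ n := Nat.gcd_dvd_left _ _

theorem smoothPart_pos (q : ℕ) {n : ℕ} (hn : n ≠ 0) : 0 < smoothPart q n :=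
  Nat.gcd_pos_of_pos_left _ (Nat.pos_of_ne_zero hn)

theorem smoothPart_mem_factoredNumbers {q : ℕ} (hq : q ≠ 0) (n : ℕ) :
    smoothPart q n ∈ Nat.factoredNumbers q.primeFactors := by
  refine Nat.mem_factoredNumbers'.2 fun p hp hpd => Nat.mem_primeFactors.2 ⟨hp, ?_, hq⟩
  exact hp.dvd_of_dvd_pow (hpd.trans (Nat.gcd_dvd_right _ _))

theorem coprime_div_smoothPart {q n : ℕ} (hq : q ≠ 0) (hn : n ≠ 0) :
    (n / smoothPart q n).Coprime q := by
  refine Nat.coprime_of_dvd fun p hp hpm hpq => ?_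
  have hdvd := smoothPart_dvd q n
  have hm0 : n / smoothPart q n ≠ 0 :=
    (Nat.div_pos (Nat.le_of_dvd (Nat.pos_of_ne_zero hn) hdvd) (smoothPart_pos q hn)).ne'
  -- `p ∣ q` occurs in `q ^ n` at least `n > v_p(n)` times, so all of `p ^ v_p(n)` is in the gcd
  have hval : (smoothPart q n).factorization p = n.factorization p := by
    rw [smoothPart, Nat.factorization_gcd hn (pow_ne_zero _ hq), Finsupp.inf_apply,
      Nat.factorization_pow, Finsupp.smul_apply, smul_eq_mul]
    exact min_eq_left ((Nat.factorization_lt p hn).le.trans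
      (Nat.le_mul_of_pos_right n (hp.factorization_pos_of_dvd hq hpq)))
  have := hp.factorization_pos_of_dvd hm0 hpm
  rw [Nat.factorization_div hdvd, Finsupp.tsub_apply, hval, tsub_self] at this
  exact this.false

theorem smoothPart_mul {q d m : ℕ} (hq : q ≠ 0) (hd : d ∈ Nat.factoredNumbers q.primeFactors)
    (hm : m.Coprime q) (hm0 : m ≠ 0) : smoothPart q (d * m) = d := by
  rw [smoothPart, Nat.Coprime.gcd_mul_right_cancel d (hm.pow_right _), Nat.gcd_eq_left]
  exact Nat.dvd_pow_of_mem_factoredNumbers hq hd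
    (Nat.le_mul_of_pos_right d (Nat.pos_of_ne_zero hm0))

theorem sum_Icc_eq_sum_factoredNumbers_sum_coprime {M : Type*} [AddCommMonoid M] {q : ℕ}
    (hq : q ≠ 0) (G : ℕ → M) (N : ℕ) :
    ∑ n ∈ Icc 1 N, G n = ∑ d ∈ Icc 1 N with d ∈ Nat.factoredNumbers q.primeFactors,
      ∑ m ∈ Icc 1 (N / d) with m.Coprime q, G (d * m) := by
  rw [sum_sigma']
  refine (sum_nbij' (fun x : Σ _ : ℕ, ℕ => x.1 * x.2)
    (fun n => ⟨smoothPart q n, n / smoothPart q n⟩) ?_ ?_ ?_ ?_ fun _ _ => rfl).symm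
  · rintro ⟨d, m⟩ hx
    simp only [mem_sigma, mem_filter, mem_Icc] at hx ⊢
    obtain ⟨⟨⟨hd1, -⟩, -⟩, ⟨hm1, hmN⟩, -⟩ := hx
    rw [Nat.le_div_iff_mul_le hd1] at hmN
    exact ⟨Nat.mul_pos hd1 hm1, by linarith⟩
  · intro n hn
    simp only [mem_Icc] at hn
    have hn0 : n ≠ 0 := by omega
    have hle := Nat.le_of_dvd (by omega) (smoothPart_dvd q n)
    simp only [mem_sigma, mem_filter, mem_Icc]
    exact ⟨⟨⟨smoothPart_pos q hn0, hle.trans hn.2⟩, smoothPart_mem_factoredNumbers hq n⟩,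
      ⟨Nat.div_pos hle (smoothPart_pos q hn0), Nat.div_le_div_right hn.2⟩,
      coprime_div_smoothPart hq hn0⟩
  · rintro ⟨d, m⟩ hx
    simp only [mem_sigma, mem_filter, mem_Icc] at hx
    have hsp := smoothPart_mul hq hx.1.2 hx.2.2 (by omega)
    simp only [hsp, Nat.mul_div_cancel_left m (by omega : 0 < d)]
  · intro n _
    exact Nat.mul_div_cancel' (smoothPart_dvd q n)

noncomputable def charCoeff {q : ℕ} [NeZero q] (W : ZMod q → ℂ) (x : ZMod q)
    (χ : DirichletCharacter ℂ q) : ℂ :=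
  (q.totient : ℂ)⁻¹ * ∑ v : (ZMod q)ˣ, W (x * v) * χ (v : ZMod q)⁻¹

theorem apply_mul_eq_sum_charCoeff {q : ℕ} [NeZero q] (W : ZMod q → ℂ) (x : ZMod q)
    {u : ZMod q} (hu : IsUnit u) :
    W (x * u) = ∑ χ : DirichletCharacter ℂ q, charCoeff W x χ * χ u := by
  obtain ⟨u, rfl⟩ := hu
  have horth : ∀ v : (ZMod q)ˣ, ∑ χ : DirichletCharacter ℂ q, χ (v : ZMod q)⁻¹ * χ u =
      if v = u then (q.totient : ℂ) else 0 := fun v => by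
    simp only [DirichletCharacter.sum_char_inv_mul_char_eq ℂ v.isUnit, Units.val_inj]
  have htot : (q.totient : ℂ) ≠ 0 := Nat.cast_ne_zero.2 (Nat.totient_pos.2 (NeZero.pos q)).ne'
  simp only [charCoeff, mul_assoc, sum_mul, ← mul_sum]
  rw [sum_comm]
  simp only [← mul_sum, horth, mul_ite, mul_zero, sum_ite_eq', mem_univ, if_true]
  field_simp

theorem summable_inv_factoredNumbers (s : Finset ℕ) :
    Summable fun d : Nat.factoredNumbers s => ((d : ℕ) : ℝ)⁻¹ :=
  (EulerProduct.summable_and_hasSum_factoredNumbers_prod_filter_prime_geometric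
    (f := invMonoidHom.comp (Nat.castRingHom ℝ : ℕ →* ℝ))
    (fun hp => by simpa using inv_lt_one_of_one_lt₀ (Nat.one_lt_cast.2 hp.one_lt)) s).1.of_norm

theorem norm_sum_Icc_div_div_le {g : ℕ → ℂ} (hg : ∀ n, ‖g n‖ ≤ 1) (N d : ℕ) :
    ‖(∑ m ∈ Icc 1 (N / d), g m) / (N : ℂ)‖ ≤ (d : ℝ)⁻¹ := by
  rcases N.eq_zero_or_pos with rfl | hN
  · simp
  have hsum : ‖∑ m ∈ Icc 1 (N / d), g m‖ ≤ ((N / d : ℕ) : ℝ) :=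
    (norm_sum_le _ _).trans (by simpa using sum_le_sum fun m (_ : m ∈ Icc 1 (N / d)) => hg m)
  rw [norm_div, Complex.norm_natCast, div_le_iff₀ (by positivity)]
  calc _ ≤ ((N / d : ℕ) : ℝ) := hsum
    _ ≤ N / d := Nat.cast_div_le
    _ = (d : ℝ)⁻¹ * N := by ring

theorem HasMeanZero.tendsto_sum_div {g : ℕ → ℂ} (h : HasMeanZero g) (d : ℕ) :
    Tendsto (fun N : ℕ => (∑ m ∈ Icc 1 (N / d), g m) / (N : ℂ)) atTop (𝓝 0) := by
  refine (isLittleO_natCast_iff_tendsto (S := fun N => ∑ m ∈ Icc 1 (N / d), g m) (by simp)).1 ?_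
  exact (hasMeanZero_iff_isLittleO.1 h).comp_of_le_mul 1
    (Eventually.of_forall fun N => (Nat.div_le_self N d).trans_eq (one_mul N).symm)

theorem sum_filter_eq_tsum_indicator {M : Type*} [AddCommMonoid M] [TopologicalSpace M]
    {s : Set ℕ} [DecidablePred (· ∈ s)] (hs : 0 ∉ s) {G : ℕ → M} {N : ℕ}
    (hG : ∀ d, N < d → G d = 0) :
    ∑ d ∈ Icc 1 N with d ∈ s, G d = ∑' d, s.indicator G d := by
  rw [sum_filter, tsum_eq_sum (s := Icc 1 N)]
  · simp only [Set.indicator_apply]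
  · intro d hd
    rcases eq_or_ne d 0 with rfl | hd0
    · exact Set.indicator_of_notMem hs G
    · simp only [mem_Icc, not_and, not_le] at hd
      simp [hG d (hd (by omega))]

theorem sum_mul_eq_sum_factoredNumbers {f : ℕ → ℂ}
    (hmult : ∀ m n : ℕ, m.Coprime n → f (m * n) = f m * f n) {q : ℕ} [NeZero q]
    (W : ZMod q → ℂ) (N : ℕ) :
    ∑ n ∈ Icc 1 N, f n * W n = ∑ d ∈ Icc 1 N with d ∈ Nat.factoredNumbers q.primeFactors,
      f d * ∑ χ : DirichletCharacter ℂ q, charCoeff W d χ * ∑ m ∈ Icc 1 (N / d), f m * χ m := by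
  rw [sum_Icc_eq_sum_factoredNumbers_sum_coprime (NeZero.ne q)]
  refine sum_congr rfl fun d hd => ?_
  have hχ : ∀ χ : DirichletCharacter ℂ q, ∑ m ∈ Icc 1 (N / d), f m * χ m =
      ∑ m ∈ Icc 1 (N / d) with m.Coprime q, f m * χ m := fun χ => by
    rw [sum_filter]
    refine sum_congr rfl fun m _ => ?_
    split_ifs with hm
    · rfl
    · rw [χ.map_nonunit (by rwa [ZMod.isUnit_iff_coprime]), mul_zero]
  simp only [hχ, mul_sum]
  rw [sum_comm]
  refine sum_congr rfl fun m hm => ?_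
  replace hm := (mem_filter.1 hm).2
  have hdm : d.Coprime m := (Nat.Coprime.coprime_dvd_right
    (Nat.dvd_pow_of_mem_factoredNumbers (NeZero.ne q) (mem_filter.1 hd).2 le_rfl)
    (hm.pow_right d)).symm
  rw [hmult d m hdm, Nat.cast_mul,
    apply_mul_eq_sum_charCoeff W _ ((ZMod.isUnit_iff_coprime m q).2 hm), mul_sum]
  exact sum_congr rfl fun χ _ => by ring

theorem norm_mul_sum_charCoeff_div_le {f : ℕ → ℂ} (hbd : ∀ n, ‖f n‖ ≤ 1) {q : ℕ} [NeZero q]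
    (W : ZMod q → ℂ) {B : ℝ} (hB : ∀ x χ, ‖charCoeff W x χ‖ ≤ B) (N d : ℕ) :
    ‖f d * (∑ χ : DirichletCharacter ℂ q, charCoeff W d χ * ∑ m ∈ Icc 1 (N / d), f m * χ m) / N‖
      ≤ Fintype.card (DirichletCharacter ℂ q) * B * (d : ℝ)⁻¹ := by
  rw [mul_div_assoc, sum_div, norm_mul]
  simp only [mul_div_assoc]
  refine (mul_le_of_le_one_left (norm_nonneg _) (hbd d)).trans ((norm_sum_le _ _).trans ?_)
  calc _ ≤ ∑ _χ : DirichletCharacter ℂ q, B * (d : ℝ)⁻¹ := sum_le_sum fun χ _ => by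
        rw [norm_mul]
        refine mul_le_mul (hB d χ) (norm_sum_Icc_div_div_le (fun m => ?_) N d) (norm_nonneg _)
          ((norm_nonneg _).trans (hB d χ))
        rw [norm_mul]
        exact mul_le_one₀ (hbd m) (norm_nonneg _) (χ.norm_le_one _)
    _ = Fintype.card (DirichletCharacter ℂ q) * B * (d : ℝ)⁻¹ := by simp [mul_assoc]

theorem hasMeanZero_mul_of_dirichletCharacter {f : ℕ → ℂ}
    (hmult : ∀ m n : ℕ, m.Coprime n → f (m * n) = f m * f n) (hbd : ∀ n, ‖f n‖ ≤ 1)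
    {q : ℕ} [NeZero q] (hχ : ∀ χ : DirichletCharacter ℂ q, HasMeanZero fun n => f n * χ n)
    (W : ZMod q → ℂ) : HasMeanZero fun n => f n * W n := by
  set S := Nat.factoredNumbers q.primeFactors
  set K := Fintype.card (DirichletCharacter ℂ q)
  obtain ⟨B, hB⟩ := Finite.bddAbove_range
    fun p : ZMod q × DirichletCharacter ℂ q => ‖charCoeff W p.1 p.2‖
  -- the contribution of `d` to the average up to `N`
  set F : ℕ → ℕ → ℂ := fun N => S.indicator fun d =>
    f d * (∑ χ : DirichletCharacter ℂ q, charCoeff W d χ * ∑ m ∈ Icc 1 (N / d), f m * χ m) / N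
  have hF : ∀ N : ℕ, (∑ n ∈ Icc 1 N, f n * W n) / N = ∑' d, F N d := fun N => by
    rw [sum_mul_eq_sum_factoredNumbers hmult W, sum_div,
      sum_filter_eq_tsum_indicator fun h => Nat.ne_zero_of_mem_factoredNumbers h rfl]
    intro d hd
    simp [Nat.div_eq_of_lt hd]
  have hbound : ∀ N d, ‖F N d‖ ≤ S.indicator (fun d : ℕ => K * B * (d : ℝ)⁻¹) d := by
    intro N d
    by_cases hd : d ∈ S
    · simpa only [F, Set.indicator_of_mem hd] using
        norm_mul_sum_charCoeff_div_le hbd W (fun x χ => hB ⟨(x, χ), rfl⟩) N d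
    · simp [F, hd]
  have hlim : ∀ d, Tendsto (F · d) atTop (𝓝 0) := by
    intro d
    by_cases hd : d ∈ S
    · simpa [F, Set.indicator_of_mem hd, mul_sum, sum_div, mul_div_assoc] using
        ((tendsto_finsetSum univ fun χ _ =>
          ((hχ χ).tendsto_sum_div d).const_mul (charCoeff W d χ)).const_mul (f d))
    · simp only [F, Set.indicator_of_notMem hd]
      exact tendsto_const_nhds
  have hsum : Summable (S.indicator fun d : ℕ => K * B * (d : ℝ)⁻¹) :=
    summable_subtype_iff_indicator.1 ((summable_inv_factoredNumbers _).mul_left (K * B))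
  simpa [HasMeanZero, hF] using
    tendsto_tsum_of_dominated_convergence hsum hlim (Eventually.of_forall hbound)

theorem hasMeanZero_mul_periodic_of_dirichletCharacter {f : ℕ → ℂ}
    (hmult : ∀ m n : ℕ, m.Coprime n → f (m * n) = f m * f n) (hbd : ∀ n, ‖f n‖ ≤ 1)
    {q : ℕ} (hq : 0 < q) (hχ : ∀ χ : DirichletCharacter ℂ q, HasMeanZero fun n => f n * χ n)
    {w : ℕ → ℂ} (hw : Function.Periodic w q) : HasMeanZero fun n => f n * w n := by
  have : NeZero q := ⟨hq.ne'⟩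
  have hwW : ∀ n : ℕ, w (n : ZMod q).val = w n := fun n => by
    rw [ZMod.val_natCast, hw.map_mod_nat]
  simpa only [hwW] using hasMeanZero_mul_of_dirichletCharacter hmult hbd hχ fun r => w r.val

theorem periodic_cexp_two_pi_I_mul_div (p q : ℕ) (hq : q ≠ 0) :
    Function.Periodic
      (fun n : ℕ => Complex.exp (2 * Real.pi * Complex.I * n * p / q)) q := by
  intro n
  have harg : 2 * Real.pi * Complex.I * ((n + q : ℕ) : ℂ) * p / q =
      2 * Real.pi * Complex.I * n * p / q + (p : ℤ) * (2 * Real.pi * Complex.I) := by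
    push_cast
    field_simp
  simp only [harg, Complex.exp_add, Complex.exp_int_mul_two_pi_mul_I, mul_one]

/-- Equivalence between aperiodicity of a bounded multiplicative function (zero mean
along every infinite arithmetic progression) and orthogonality to all Dirichlet
characters; the converse direction also yields zero mean against all rational
phases `e(np/q)`. -/
theorem stmt_18 (f : ℕ → ℂ)
    (hmult : ∀ m n : ℕ, Nat.Coprime m n → f (m * n) = f m * f n)
    (hbd : ∀ n : ℕ, ‖f n‖ ≤ 1) :
    ((∀ a b : ℕ, 1 ≤ a → 1 ≤ b →
        Tendsto (fun N : ℕ => (∑ n ∈ Finset.Icc 1 N, f (a * n + b)) / (N : ℂ))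
          atTop (nhds 0)) →
      ∀ (q : ℕ) (χ : DirichletCharacter ℂ q),
        Tendsto (fun N : ℕ => (∑ n ∈ Finset.Icc 1 N, f n * χ (n : ZMod q)) / (N : ℂ))
          atTop (nhds 0)) ∧
    ((∀ (q : ℕ) (χ : DirichletCharacter ℂ q),
        Tendsto (fun N : ℕ => (∑ n ∈ Finset.Icc 1 N, f n * χ (n : ZMod q)) / (N : ℂ))
          atTop (nhds 0)) →
      (∀ p q : ℕ, 1 ≤ q →
          Tendsto (fun N : ℕ => (∑ n ∈ Finset.Icc 1 N,
              f n * Complex.exp (2 * Real.pi * Complex.I * (n : ℂ) * (p : ℂ) / (q : ℂ)))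
            / (N : ℂ)) atTop (nhds 0)) ∧
        (∀ a b : ℕ, 1 ≤ a → 1 ≤ b →
          Tendsto (fun N : ℕ => (∑ n ∈ Finset.Icc 1 N, f (a * n + b)) / (N : ℂ))
            atTop (nhds 0))) := by
  refine ⟨fun hAP q χ => hasMeanZero_mul_dirichletCharacter_of_ap hAP q χ,
    fun hχ => ⟨fun p q hq => ?_, fun a b ha _ => ?_⟩⟩
  · exact hasMeanZero_mul_periodic_of_dirichletCharacter hmult hbd hq (hχ q)
      (periodic_cexp_two_pi_I_mul_div p q (by omega))
  · refine HasMeanZero.comp_affine ha ?_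
    have hw : Function.Periodic (fun n => if n ≡ b [MOD a] then (1 : ℂ) else 0) a :=
      fun n => if_congr (by simp [Nat.ModEq]) rfl rfl
    simpa only [mul_ite, mul_one, mul_zero] using
      hasMeanZero_mul_periodic_of_dirichletCharacter hmult hbd ha (hχ a) hw
end
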